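/- Let 1 ≤ k ≤ n and let Φ be the conditional pigeon-hole encoding of y → (x_1 + ⋯ + x_n ≥ k), consisting of: for 1 ≤ i ≤ k the clause (¬y ∨ p_{i,1} ∨ ⋯ ∨ p_{i,n−k+1}); for 1 ≤ i ≤ k and 1 ≤ j ≤ n−k+1 the clause (x_{i+j−1} ∨ ¬p_{i,j}); and for 1 ≤ i < k and 1 ≤ j < n−k+1 the clause (¬p_{i+1,j} ∨ p_{i,1} ∨ ⋯ ∨ p_{i,j}). Then for any set of n−k+1 distinct indices in {1, …, n}, assigning the corresponding variables x_i to false makes unit propagation derive ¬y from Φ restricted to this assignment. -/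
import Mathlib


abbrev Lit (V : Type) := V × Bool
abbrev Clause (V : Type) := Finset (Lit V)
abbrev CnfForm (V : Type) := Finset (Clause V)

variable {V : Type} [DecidableEq V]

/-- Restriction Φ|_ρ : remove clauses containing a literal of ρ, and delete from the
remaining clauses every literal whose complement is in ρ. -/
def restrict (Φ : CnfForm V) (ρ : Finset (Lit V)) : CnfForm V :=
  (Φ.filter fun c => ∀ l ∈ ρ, l ∉ c).image fun c => c.filter fun l => (l.1, !l.2) ∉ ρ

/-- Unit propagation derives the literal `l` from `Φ` : repeatedly assigning the
literals of unit clauses true and simplifying eventually produces the unit clause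
`{l}` or the empty clause. -/
inductive UPDerives : CnfForm V → Lit V → Prop
  | unit {Φ : CnfForm V} {l : Lit V} : ({l} : Clause V) ∈ Φ → UPDerives Φ l
  | bot {Φ : CnfForm V} {l : Lit V} : (∅ : Clause V) ∈ Φ → UPDerives Φ l
  | step {Φ : CnfForm V} {l : Lit V} (m : Lit V) : ({m} : Clause V) ∈ Φ →
      UPDerives (restrict Φ {m}) l → UPDerives Φ l

/-- Unit propagation derives the empty clause from `Φ`, i.e. `Φ* = ⊥`. -/
inductive UPEmpty : CnfForm V → Prop
  | bot {Φ : CnfForm V} : (∅ : Clause V) ∈ Φ → UPEmpty Φ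
  | step {Φ : CnfForm V} (m : Lit V) : ({m} : Clause V) ∈ Φ → UPEmpty (restrict Φ {m}) → UPEmpty Φ

/-- `UPReach Φ Ψ` : the formula `Ψ` is obtained from `Φ` by a sequence of
unit-propagation steps. -/
inductive UPReach : CnfForm V → CnfForm V → Prop
  | refl (Φ : CnfForm V) : UPReach Φ Φ
  | step {Φ Ψ : CnfForm V} (m : Lit V) : UPReach Φ Ψ → ({m} : Clause V) ∈ Ψ →
      UPReach Φ (restrict Ψ {m})

/-- The set of variables occurring in `Φ`. -/
def varsOf (Φ : CnfForm V) : Finset V := Φ.biUnion fun c => c.image Prod.fst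

/-- A Horn formula: every clause contains at most one positive literal. -/
def IsHorn (Φ : CnfForm V) : Prop := ∀ c ∈ Φ, (c.filter fun l => l.2 = true).card ≤ 1

/-- `Φ⁻` : the negative clauses of `Φ` (no positive literal). -/
def negClauses (Φ : CnfForm V) : CnfForm V := Φ.filter fun c => ∀ l ∈ c, l.2 = false

/-- `Φ⁺` : the clauses of `Φ` with exactly one positive literal. -/
def posPart (Φ : CnfForm V) : CnfForm V :=
  Φ.filter fun c => (c.filter fun l => l.2 = true).card = 1

/-- The conditional pigeon-hole encoding of `y → (x_1 + ⋯ + x_n ≥ k)`: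
for `1 ≤ i ≤ k` the clause `(¬y ∨ p_{i,1} ∨ ⋯ ∨ p_{i,n-k+1})`;
for `1 ≤ i ≤ k`, `1 ≤ j ≤ n-k+1` the clause `(x_{i+j-1} ∨ ¬p_{i,j})`;
for `1 ≤ i < k`, `1 ≤ j < n-k+1` the clause `(¬p_{i+1,j} ∨ p_{i,1} ∨ ⋯ ∨ p_{i,j})`. -/
def phpCond (n k : ℕ) (x : ℕ → V) (p : ℕ → ℕ → V) (y : V) : CnfForm V :=
  ((Finset.Icc 1 k).image fun i =>
      insert ((y, false) : Lit V)
        ((Finset.Icc 1 (n - k + 1)).image fun j => ((p i j, true) : Lit V)))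
  ∪ ((Finset.Icc 1 k ×ˢ Finset.Icc 1 (n - k + 1)).image fun q =>
      ({(x (q.1 + q.2 - 1), true), (p q.1 q.2, false)} : Clause V))
  ∪ ((Finset.Icc 1 (k - 1) ×ˢ Finset.Icc 1 (n - k)).image fun q =>
      insert ((p (q.1 + 1) q.2, false) : Lit V)
        ((Finset.Icc 1 q.2).image fun l => ((p q.1 l, true) : Lit V)))

lemma mem_restrict_of {Φ : CnfForm V} {ρ : Finset (Lit V)} {c : Clause V}
    (hc : c ∈ Φ) (h : ∀ l ∈ ρ, l ∉ c) :
    (c.filter fun l => (l.1, !l.2) ∉ ρ) ∈ restrict Φ ρ :=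
  Finset.mem_image.mpr ⟨c, Finset.mem_filter.mpr ⟨hc, h⟩, rfl⟩

lemma restrict_restrict (Φ : CnfForm V) (ρ σ : Finset (Lit V))
    (h : ∀ l ∈ σ, (l.1, !l.2) ∉ ρ) :
    restrict (restrict Φ ρ) σ = restrict Φ (ρ ∪ σ) := by
  unfold restrict
  rw [Finset.filter_image, Finset.image_image, Finset.filter_filter]
  have hfil : (Φ.filter fun c => (∀ l ∈ ρ, l ∉ c) ∧
        ∀ l ∈ σ, l ∉ c.filter fun l => (l.1, !l.2) ∉ ρ)
      = Φ.filter fun c => ∀ l ∈ ρ ∪ σ, l ∉ c := by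
    apply Finset.filter_congr
    intro c _
    simp only [Finset.mem_filter, Finset.mem_union, not_and]
    constructor
    · rintro ⟨h1, h2⟩ l (hl | hl)
      · exact h1 l hl
      · intro hlc; exact (h2 l hl hlc) (h l hl)
    · intro h1
      refine ⟨fun l hl => h1 l (Or.inl hl), fun l hl hlc => absurd hlc (h1 l (Or.inr hl))⟩
  rw [hfil]
  apply Finset.image_congr
  intro c hc
  simp only [Function.comp]
  rw [Finset.filter_filter]
  apply Finset.filter_congr
  intro l _
  simp only [Finset.mem_union, not_or]


/-- For the conditional pigeon-hole encoding of `y → (Σ x_i ≥ k)`,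
assigning any `n - k + 1` distinct variables `x_i` to false makes unit propagation
derive `¬y` from the restricted formula. -/
theorem stmt9 {V : Type} [DecidableEq V] (n k : ℕ) (hk : 1 ≤ k) (hkn : k ≤ n)
    (x : ℕ → V) (p : ℕ → ℕ → V) (y : V)
    (hx : ∀ i ∈ Finset.Icc 1 n, ∀ j ∈ Finset.Icc 1 n, x i = x j → i = j)
    (hpinj : ∀ i ∈ Finset.Icc 1 k, ∀ j ∈ Finset.Icc 1 (n - k + 1),
      ∀ i' ∈ Finset.Icc 1 k, ∀ j' ∈ Finset.Icc 1 (n - k + 1),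
        p i j = p i' j' → i = i' ∧ j = j')
    (hxp : ∀ l ∈ Finset.Icc 1 n, ∀ i ∈ Finset.Icc 1 k, ∀ j ∈ Finset.Icc 1 (n - k + 1),
      x l ≠ p i j)
    (hxy : ∀ i ∈ Finset.Icc 1 n, x i ≠ y)
    (hpy : ∀ i ∈ Finset.Icc 1 k, ∀ j ∈ Finset.Icc 1 (n - k + 1), p i j ≠ y)
    (T : Finset ℕ) (hT : T ⊆ Finset.Icc 1 n) (hTcard : T.card = n - k + 1) :
    UPDerives (restrict (phpCond n k x p y) (T.image fun i => ((x i, false) : Lit V)))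
      (y, false) := by
  classical
  obtain ⟨m, hmdef⟩ : ∃ m, m = n - k + 1 := ⟨_, rfl⟩
  rw [← hmdef] at hTcard hpinj hxp hpy
  set ρ0 : Finset (Lit V) := T.image fun i => ((x i, false) : Lit V) with hρ0
  set u : ℕ × ℕ → Lit V := fun q => (p q.1 q.2, false) with hu
  have hTne : T.Nonempty := Finset.card_pos.mp (by omega)
  obtain ⟨t0, htT, hTle⟩ : ∃ t0 ∈ T, ∀ a ∈ T, a ≤ t0 :=
    ⟨T.max' hTne, T.max'_mem hTne, fun a ha => T.le_max' a ha⟩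
  have hTmem : ∀ a ∈ T, 1 ≤ a ∧ a ≤ n := fun a ha => Finset.mem_Icc.mp (hT ha)
  have htn : t0 ≤ n := (hTmem t0 htT).2
  have hmt : m ≤ t0 := by
    have hsub : T ⊆ Finset.Icc 1 t0 := fun a ha =>
      Finset.mem_Icc.mpr ⟨(hTmem a ha).1, hTle a ha⟩
    have := Finset.card_le_card hsub
    rw [Nat.card_Icc] at this; omega
  obtain ⟨i0, hi0def⟩ : ∃ i, i = t0 + 1 - m := ⟨_, rfl⟩
  have hi01 : 1 ≤ i0 := by omega
  have hi0k : i0 ≤ k := by omega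
  have ht0i0 : t0 = i0 + m - 1 := by omega
  obtain ⟨cnt, hcnt⟩ : ∃ f : ℕ → ℕ, ∀ a, f a = (T.filter (· ≤ a)).card := ⟨_, fun _ => rfl⟩
  have cnt_le : ∀ a b : ℕ, b ≤ a → cnt a ≤ cnt b + (a - b) := by
    intro a b hba
    rw [hcnt, hcnt]
    have hsub : T.filter (· ≤ a) ⊆ T.filter (· ≤ b) ∪ Finset.Icc (b + 1) a := by
      intro z hz; rw [Finset.mem_filter] at hz
      rcases le_or_gt z b with h | h
      · exact Finset.mem_union_left _ (Finset.mem_filter.mpr ⟨hz.1, h⟩)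
      · exact Finset.mem_union_right _ (Finset.mem_Icc.mpr ⟨h, hz.2⟩)
    refine (Finset.card_le_card hsub).trans ?_
    refine (Finset.card_union_le _ _).trans ?_
    rw [Nat.card_Icc]; omega
  have cnt_t0 : cnt t0 = m := by
    rw [hcnt, Finset.filter_true_of_mem (fun a ha => hTle a ha), hTcard]
  have cond_i0 : ∀ j, 1 ≤ j → j ≤ m → j ≤ cnt (i0 + j - 1) := by
    intro j h1 hj
    have h := cnt_le t0 (i0 + j - 1) (by omega)
    rw [cnt_t0] at h; omega
  have cnt_mem : ∀ j, 1 ≤ j → j ≤ cnt j → j ∈ T := by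
    intro j h1 hj
    rw [hcnt] at hj
    have hsub : T.filter (· ≤ j) ⊆ Finset.Icc 1 j := fun z hz =>
      Finset.mem_Icc.mpr ⟨(hTmem z (Finset.mem_filter.mp hz).1).1, (Finset.mem_filter.mp hz).2⟩
    have heq : T.filter (· ≤ j) = Finset.Icc 1 j :=
      Finset.eq_of_subset_of_card_le hsub (by rw [Nat.card_Icc]; omega)
    have hjm : j ∈ T.filter (· ≤ j) := by rw [heq]; exact Finset.mem_Icc.mpr ⟨h1, le_refl j⟩
    exact (Finset.mem_filter.mp hjm).1
  have cnt_drop : ∀ a, 1 ≤ a → a ∉ T → cnt a = cnt (a - 1) := by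
    intro a h1 ha
    rw [hcnt, hcnt]
    congr 1
    ext z; simp only [Finset.mem_filter]
    constructor
    · rintro ⟨hz, hza⟩
      refine ⟨hz, ?_⟩
      have : z ≠ a := fun h => ha (h ▸ hz)
      omega
    · rintro ⟨hz, hza⟩; exact ⟨hz, by omega⟩
  set D : Finset (ℕ × ℕ) :=
    ((Finset.Icc 1 i0 ×ˢ Finset.Icc 1 (m - 1)).filter fun q => q.2 ≤ cnt (q.1 + q.2 - 1))
      ∪ {(i0, m)} with hD
  have hDmem : ∀ q ∈ D, 1 ≤ q.1 ∧ q.1 ≤ i0 ∧ 1 ≤ q.2 ∧ q.2 ≤ m ∧ q.2 ≤ cnt (q.1 + q.2 - 1) := by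
    intro q hq
    rcases Finset.mem_union.mp hq with h | h
    · obtain ⟨hmem, hcond⟩ := Finset.mem_filter.mp h
      obtain ⟨h1, h2⟩ := Finset.mem_product.mp hmem
      rw [Finset.mem_Icc] at h1 h2
      exact ⟨h1.1, h1.2, h2.1, by omega, hcond⟩
    · rw [Finset.mem_singleton] at h; subst h
      exact ⟨hi01, le_refl _, by omega, le_refl _, cond_i0 m (by omega) le_rfl⟩
  have hD_i0 : ∀ j, 1 ≤ j → j ≤ m → (i0, j) ∈ D := by
    intro j h1 hj
    rcases eq_or_lt_of_le hj with h | h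
    · subst h; exact Finset.mem_union_right _ (Finset.mem_singleton.mpr rfl)
    · refine Finset.mem_union_left _ (Finset.mem_filter.mpr ⟨?_, cond_i0 j h1 hj⟩)
      exact Finset.mem_product.mpr ⟨Finset.mem_Icc.mpr ⟨hi01, le_refl _⟩,
        Finset.mem_Icc.mpr ⟨h1, by omega⟩⟩
  -- σ facts
  have hσfalse : ∀ (S : Finset (ℕ × ℕ)) (l : Lit V), l ∈ ρ0 ∪ S.image u → l.2 = false := by
    intro S l hl
    rcases Finset.mem_union.mp hl with h | h
    · obtain ⟨t, _, rfl⟩ := Finset.mem_image.mp h; rfl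
    · obtain ⟨q, _, rfl⟩ := Finset.mem_image.mp h; rfl
  have hptrue : ∀ (S : Finset (ℕ × ℕ)) (a b : ℕ), ((p a b, true) : Lit V) ∉ ρ0 ∪ S.image u := by
    intro S a b h
    simpa using hσfalse S _ h
  have hytrue : ∀ (S : Finset (ℕ × ℕ)), ((y, true) : Lit V) ∉ ρ0 ∪ S.image u := by
    intro S h
    simpa using hσfalse S _ h
  have hyσ : ∀ S : Finset (ℕ × ℕ), S ⊆ D → ((y, false) : Lit V) ∉ ρ0 ∪ S.image u := by
    intro S hS h
    rcases Finset.mem_union.mp h with h | h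
    · obtain ⟨t, ht', heq⟩ := Finset.mem_image.mp h
      exact hxy t (hT ht') (congrArg Prod.fst heq)
    · obtain ⟨q, hq, heq⟩ := Finset.mem_image.mp h
      obtain ⟨h1, h2, h3, h4, _⟩ := hDmem q (hS hq)
      exact hpy q.1 (Finset.mem_Icc.mpr ⟨h1, le_trans h2 hi0k⟩)
        q.2 (Finset.mem_Icc.mpr ⟨h3, h4⟩) (congrArg Prod.fst heq)
  have hpσ : ∀ S : Finset (ℕ × ℕ), S ⊆ D → ∀ a b : ℕ, 1 ≤ a → a ≤ k → 1 ≤ b → b ≤ m →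
      (((p a b, false) : Lit V) ∈ ρ0 ∪ S.image u ↔ (a, b) ∈ S) := by
    intro S hS a b ha1 hak hb1 hbm
    constructor
    · intro h
      rcases Finset.mem_union.mp h with h | h
      · obtain ⟨t, ht', heq⟩ := Finset.mem_image.mp h
        exact absurd (congrArg Prod.fst heq)
          (hxp t (hT ht') a (Finset.mem_Icc.mpr ⟨ha1, hak⟩) b (Finset.mem_Icc.mpr ⟨hb1, hbm⟩))
      · obtain ⟨q, hq, heq⟩ := Finset.mem_image.mp h
        obtain ⟨h1, h2, h3, h4, _⟩ := hDmem q (hS hq)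
        obtain ⟨e1, e2⟩ := hpinj q.1 (Finset.mem_Icc.mpr ⟨h1, le_trans h2 hi0k⟩)
          q.2 (Finset.mem_Icc.mpr ⟨h3, h4⟩) a (Finset.mem_Icc.mpr ⟨ha1, hak⟩)
          b (Finset.mem_Icc.mpr ⟨hb1, hbm⟩) (congrArg Prod.fst heq)
        have : q = (a, b) := Prod.ext e1 e2
        exact this ▸ hq
    · intro h
      exact Finset.mem_union_right _ (Finset.mem_image.mpr ⟨(a, b), h, rfl⟩)
  -- clause memberships
  have hmA : ∀ i : ℕ, 1 ≤ i → i ≤ k →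
      (insert ((y, false) : Lit V) ((Finset.Icc 1 m).image fun j => ((p i j, true) : Lit V)))
        ∈ phpCond n k x p y := by
    intro i h1 h2
    unfold phpCond
    rw [← hmdef]
    exact Finset.mem_union_left _ (Finset.mem_union_left _
      (Finset.mem_image.mpr ⟨i, Finset.mem_Icc.mpr ⟨h1, h2⟩, rfl⟩))
  have hmB : ∀ i j : ℕ, 1 ≤ i → i ≤ k → 1 ≤ j → j ≤ m →
      ({((x (i + j - 1), true) : Lit V), (p i j, false)} : Clause V) ∈ phpCond n k x p y := by
    intro i j h1 h2 h3 h4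
    unfold phpCond
    rw [← hmdef]
    refine Finset.mem_union_left _ (Finset.mem_union_right _ (Finset.mem_image.mpr
      ⟨(i, j), ?_, rfl⟩))
    exact Finset.mem_product.mpr ⟨Finset.mem_Icc.mpr ⟨h1, h2⟩, Finset.mem_Icc.mpr ⟨h3, h4⟩⟩
  have hmC : ∀ i j : ℕ, 1 ≤ i → i ≤ k - 1 → 1 ≤ j → j ≤ m - 1 →
      (insert ((p (i + 1) j, false) : Lit V)
        ((Finset.Icc 1 j).image fun l => ((p i l, true) : Lit V))) ∈ phpCond n k x p y := by
    intro i j h1 h2 h3 h4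
    unfold phpCond
    refine Finset.mem_union_right _ (Finset.mem_image.mpr ⟨(i, j), ?_, rfl⟩)
    exact Finset.mem_product.mpr ⟨Finset.mem_Icc.mpr ⟨h1, h2⟩, Finset.mem_Icc.mpr ⟨h3, by omega⟩⟩
  -- claim A
  have claimA : ∀ q ∈ D, ∀ S ⊆ D, q ∉ S → (∀ q' ∈ D, q'.1 < q.1 → q' ∈ S) →
      ({u q} : Clause V) ∈ restrict (phpCond n k x p y) (ρ0 ∪ S.image u) := by
    intro q hqD S hS hqS hmin
    obtain ⟨hq1, hqi0, hq2, hqm, hqcnt⟩ := hDmem q hqD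
    by_cases hBc : q.1 + q.2 - 1 ∈ T
    · -- via the clause x_{i+j-1} ∨ ¬p_{i,j}
      have hc := hmB q.1 q.2 hq1 (le_trans hqi0 hi0k) hq2 hqm
      have hside : ∀ l ∈ ρ0 ∪ S.image u,
          l ∉ ({((x (q.1 + q.2 - 1), true) : Lit V), (p q.1 q.2, false)} : Clause V) := by
        intro l hl hlc
        rcases Finset.mem_insert.mp hlc with rfl | hlc
        · simpa using hσfalse S _ hl
        · rw [Finset.mem_singleton] at hlc; subst hlc
          have := (hpσ S hS q.1 q.2 hq1 (le_trans hqi0 hi0k) hq2 hqm).mp hl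
          exact hqS (by simpa using this)
      have hmem := mem_restrict_of hc hside
      have heq : (({((x (q.1 + q.2 - 1), true) : Lit V), (p q.1 q.2, false)} : Clause V).filter
          fun l => (l.1, !l.2) ∉ ρ0 ∪ S.image u) = ({u q} : Clause V) := by
        rw [show ({((x (q.1 + q.2 - 1), true) : Lit V), (p q.1 q.2, false)} : Clause V)
          = insert ((x (q.1 + q.2 - 1), true) : Lit V) {((p q.1 q.2, false) : Lit V)} from rfl]
        rw [Finset.filter_insert, if_neg, Finset.filter_singleton, if_pos]
        · show ((p q.1 q.2, true) : Lit V) ∉ ρ0 ∪ S.image u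
          exact hptrue S q.1 q.2
        · show ¬ (((x (q.1 + q.2 - 1), false) : Lit V) ∉ ρ0 ∪ S.image u)
          rw [not_not]
          exact Finset.mem_union_left _ (Finset.mem_image.mpr ⟨q.1 + q.2 - 1, hBc, rfl⟩)
      rw [← heq]
      exact hmem
    · -- via the clause ¬p_{i,j} ∨ p_{i-1,1} ∨ ⋯ ∨ p_{i-1,j}
      have hi2 : 2 ≤ q.1 := by
        by_contra h
        have hq1e : q.1 = 1 := by omega
        rw [hq1e] at hqcnt
        have : q.2 ∈ T := cnt_mem q.2 hq2 (by simpa using hqcnt)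
        refine hBc ?_
        rw [hq1e]
        simpa using this
      have hjm1 : q.2 ≤ m - 1 := by
        rcases Finset.mem_union.mp hqD with h | h
        · obtain ⟨hmem, _⟩ := Finset.mem_filter.mp h
          exact (Finset.mem_Icc.mp (Finset.mem_product.mp hmem).2).2
        · rw [Finset.mem_singleton] at h
          exfalso; apply hBc
          rw [h]
          show i0 + m - 1 ∈ T
          rw [← ht0i0]
          exact htT
      have hpre : ∀ l, 1 ≤ l → l ≤ q.2 → (q.1 - 1, l) ∈ S := by
        intro l hl1 hl2
        have hdrop : cnt (q.1 + q.2 - 1) = cnt (q.1 + q.2 - 2) := by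
          have := cnt_drop (q.1 + q.2 - 1) (by omega) hBc
          rwa [show q.1 + q.2 - 1 - 1 = q.1 + q.2 - 2 from by omega] at this
        have hle := cnt_le (q.1 + q.2 - 2) (q.1 - 1 + l - 1) (by omega)
        have hcond : l ≤ cnt (q.1 - 1 + l - 1) := by omega
        have hmemD : (q.1 - 1, l) ∈ D := by
          refine Finset.mem_union_left _ (Finset.mem_filter.mpr ⟨?_, hcond⟩)
          exact Finset.mem_product.mpr ⟨Finset.mem_Icc.mpr ⟨by omega, by omega⟩,
            Finset.mem_Icc.mpr ⟨hl1, by omega⟩⟩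
        refine hmin _ hmemD ?_
        show q.1 - 1 < q.1
        omega
      have hc := hmC (q.1 - 1) q.2 (by omega) (by omega) hq2 hjm1
      rw [show q.1 - 1 + 1 = q.1 from by omega] at hc
      have hside : ∀ l ∈ ρ0 ∪ S.image u,
          l ∉ insert ((p q.1 q.2, false) : Lit V)
            ((Finset.Icc 1 q.2).image fun l => ((p (q.1 - 1) l, true) : Lit V)) := by
        intro l hl hlc
        rcases Finset.mem_insert.mp hlc with rfl | hlc
        · have := (hpσ S hS q.1 q.2 hq1 (le_trans hqi0 hi0k) hq2 hqm).mp hl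
          exact hqS (by simpa using this)
        · obtain ⟨l', _, heq⟩ := Finset.mem_image.mp hlc
          have := hσfalse S l hl
          rw [← heq] at this
          simp at this
      have hmem := mem_restrict_of hc hside
      have heq : ((insert ((p q.1 q.2, false) : Lit V)
          ((Finset.Icc 1 q.2).image fun l => ((p (q.1 - 1) l, true) : Lit V))).filter
          fun l => (l.1, !l.2) ∉ ρ0 ∪ S.image u) = ({u q} : Clause V) := by
        rw [Finset.filter_insert, if_pos]
        · have hemp : (((Finset.Icc 1 q.2).image fun l => ((p (q.1 - 1) l, true) : Lit V)).filter
              fun l => (l.1, !l.2) ∉ ρ0 ∪ S.image u) = ∅ := by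
            rw [Finset.filter_eq_empty_iff]
            intro l hlc
            obtain ⟨l', hl', heq⟩ := Finset.mem_image.mp hlc
            rw [← heq, not_not]
            show ((p (q.1 - 1) l', false) : Lit V) ∈ ρ0 ∪ S.image u
            rw [Finset.mem_Icc] at hl'
            refine (hpσ S hS (q.1 - 1) l' (by omega) (by omega) hl'.1 (by omega)).mpr ?_
            exact hpre l' hl'.1 hl'.2
          rw [hemp]
          rfl
        · show ((p q.1 q.2, true) : Lit V) ∉ ρ0 ∪ S.image u
          exact hptrue S q.1 q.2
      rw [← heq]
      exact hmem
  -- claim B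
  have claimB : ({((y, false) : Lit V)} : Clause V)
      ∈ restrict (phpCond n k x p y) (ρ0 ∪ D.image u) := by
    have hc := hmA i0 hi01 hi0k
    have hside : ∀ l ∈ ρ0 ∪ D.image u,
        l ∉ insert ((y, false) : Lit V)
          ((Finset.Icc 1 m).image fun j => ((p i0 j, true) : Lit V)) := by
      intro l hl hlc
      rcases Finset.mem_insert.mp hlc with rfl | hlc
      · exact hyσ D (le_refl D) hl
      · obtain ⟨l', _, heq⟩ := Finset.mem_image.mp hlc
        have := hσfalse D l hl
        rw [← heq] at this
        simp at this
    have hmem := mem_restrict_of hc hside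
    have heq : ((insert ((y, false) : Lit V)
        ((Finset.Icc 1 m).image fun j => ((p i0 j, true) : Lit V))).filter
        fun l => (l.1, !l.2) ∉ ρ0 ∪ D.image u) = ({((y, false) : Lit V)} : Clause V) := by
      rw [Finset.filter_insert, if_pos]
      · have hemp : (((Finset.Icc 1 m).image fun j => ((p i0 j, true) : Lit V)).filter
            fun l => (l.1, !l.2) ∉ ρ0 ∪ D.image u) = ∅ := by
          rw [Finset.filter_eq_empty_iff]
          intro l hlc
          obtain ⟨j, hj, heq⟩ := Finset.mem_image.mp hlc
          rw [← heq, not_not]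
          show ((p i0 j, false) : Lit V) ∈ ρ0 ∪ D.image u
          rw [Finset.mem_Icc] at hj
          exact (hpσ D (le_refl D) i0 j hi01 hi0k hj.1 hj.2).mpr (hD_i0 j hj.1 hj.2)
        rw [hemp]
        rfl
      · show ((y, true) : Lit V) ∉ ρ0 ∪ D.image u
        exact hytrue D
    rw [← heq]
    exact hmem
  -- main induction
  have main : ∀ r : ℕ, ∀ S ⊆ D, (D \ S).card ≤ r →
      UPDerives (restrict (phpCond n k x p y) (ρ0 ∪ S.image u)) ((y, false) : Lit V) := by
    intro r
    induction r with
    | zero =>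
      intro S hS hcard
      have hempty : D \ S = ∅ := Finset.card_eq_zero.mp (Nat.le_antisymm hcard (Nat.zero_le _))
      have hSD : S = D := Finset.Subset.antisymm hS (fun q hq => by
        by_contra hq'
        exact absurd (Finset.mem_sdiff.mpr ⟨hq, hq'⟩) (by simp [hempty]))
      exact UPDerives.unit (by rw [hSD]; exact claimB)
    | succ r ih =>
      intro S hS hcard
      by_cases hfull : D ⊆ S
      · have hSD : S = D := Finset.Subset.antisymm hS hfull
        exact UPDerives.unit (by rw [hSD]; exact claimB)
      · obtain ⟨q0, hq0⟩ : (D \ S).Nonempty := by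
          rwa [Finset.sdiff_nonempty]
        obtain ⟨q, hqmem, hqmin⟩ := Finset.exists_min_image (D \ S) (fun q => q.1) ⟨q0, hq0⟩
        have hqD : q ∈ D := (Finset.mem_sdiff.mp hqmem).1
        have hqS : q ∉ S := (Finset.mem_sdiff.mp hqmem).2
        have hmin : ∀ q' ∈ D, q'.1 < q.1 → q' ∈ S := by
          intro q' hq' hlt
          by_contra h
          exact absurd hlt (not_lt.mpr (hqmin q' (Finset.mem_sdiff.mpr ⟨hq', h⟩)))
        have hunit := claimA q hqD S hS hqS hmin
        refine UPDerives.step (u q) hunit ?_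
        have hcompl : ∀ l ∈ ({u q} : Finset (Lit V)), (l.1, !l.2) ∉ ρ0 ∪ S.image u := by
          intro l hl
          rw [Finset.mem_singleton] at hl
          subst hl
          exact hptrue S q.1 q.2
        rw [restrict_restrict _ _ _ hcompl]
        have hset : (ρ0 ∪ S.image u) ∪ {u q} = ρ0 ∪ (insert q S).image u := by
          rw [Finset.image_insert]
          ext l
          simp only [Finset.mem_union, Finset.mem_insert, Finset.mem_singleton]
          tauto
        rw [hset]
        refine ih (insert q S) (Finset.insert_subset hqD hS) ?_
        rw [Finset.sdiff_insert]
        have h1 := Finset.card_erase_of_mem hqmem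
        omega
  have hfin := main (D \ ∅).card ∅ (by simp) le_rfl
  simpa using hfin
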